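/- Let n, k, ℓ be positive integers with 2(k+ℓ) < n, let 0 ≤ c ≤ k and let I = {i_1 < … < i_u} and J = {j_1 < … < j_v} be subsets of {1,…,ℓ} with u = |I| ≤ k − c. Then η_{(c,I,J)} is nonzero and its leading monomial with respect to the graded lexicographic order is LM(η_{(c,I,J)}) = (∏_{a=1}^{c} x_{a,a}) · (∏_{a=1}^{v} y_{c+a,j_a}) · (∏_{a=1}^{u} r_{c+a,k+i_a}). -/

import Mathlib

open MvPolynomial TensorProduct
open scoped Classical

noncomputable section

namespace Pieri

/-! ### Young diagrams and skew Kostka numbers.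

A Young diagram is encoded as a finitely supported function `D : ℕ →₀ ℕ`
(0-indexed: `D i` is the length of row `i+1`), weakly decreasing. -/

def IsYoung (D : ℕ →₀ ℕ) : Prop := ∀ i, D (i + 1) ≤ D i

/-- `|D|`, the number of boxes. -/
def ysize (D : ℕ →₀ ℕ) : ℕ := D.sum fun _ e => e

/-- `Interlaces A B` : `A ⊒ B`, i.e. `a_j ≥ b_j ≥ a_{j+1}` for all `j`. -/
def Interlaces (A B : ℕ →₀ ℕ) : Prop := ∀ j, B j ≤ A j ∧ A (j + 1) ≤ B j

/-- Semistandard skew tableau of shape `F/E` with entries in `{1,…,m}` and content `M`.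
The filling `T` is normalized to be `0` outside the boxes of `F/E`. -/
def IsSkewSSYT (E F : ℕ →₀ ℕ) (m : ℕ) (M : Fin m → ℕ) (T : ℕ × ℕ → ℕ) : Prop :=
  (∀ i, E i ≤ F i) ∧
  (∀ i j, E i ≤ j → j < F i → 1 ≤ T (i, j) ∧ T (i, j) ≤ m) ∧
  (∀ i j, ¬(E i ≤ j ∧ j < F i) → T (i, j) = 0) ∧
  (∀ i j, E i ≤ j → j + 1 < F i → T (i, j) ≤ T (i, j + 1)) ∧
  (∀ i j, E i ≤ j → j < F i → E (i + 1) ≤ j → j < F (i + 1) → T (i, j) < T (i + 1, j)) ∧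
  (∀ r : Fin m, Set.ncard {c : ℕ × ℕ | E c.1 ≤ c.2 ∧ c.2 < F c.1 ∧ T c = (r : ℕ) + 1} = M r)

/-- The skew Kostka number `K_{F/E, M}`. -/
def kostka (E F : ℕ →₀ ℕ) (m : ℕ) (M : Fin m → ℕ) : ℕ :=
  Set.ncard {T : ℕ × ℕ → ℕ | IsSkewSSYT E F m M T}

/-! ### The posets `Γ(k,ℓ)` and `Γ̃(k,ℓ)` and the lattice cone `Ω(k,ℓ)`. -/

/-- Ambient type containing `Γ̃(k,ℓ)`: `Sum.inl (i,j)` encodes `γ_j^(i)`,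
`Sum.inr (s,t)` encodes `ε_{s,t}`. -/
abbrev GammaAmb : Type := (ℤ × ℕ) ⊕ (ℕ × ℕ)

def gammaSet (k l : ℕ) : Set (ℤ × ℕ) :=
  {p | -(l : ℤ) ≤ p.1 ∧ p.1 ≤ (l : ℤ) ∧ 1 ≤ p.2 ∧ (p.2 : ℤ) ≤ (k : ℤ) + max 0 p.1}

def epsSet (l : ℕ) : Set (ℕ × ℕ) := {p | 1 ≤ p.1 ∧ p.1 < p.2 ∧ p.2 ≤ l}

def gammaTildeSet (k l : ℕ) : Set GammaAmb :=
  Sum.inl '' gammaSet k l ∪ Sum.inr '' epsSet l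

/-- One-step generating relations of the partial order of `Γ(k,ℓ)`:
`gammaStep k l a b` means "`a ≥ b`" is one of the defining relations. -/
def gammaStep (k l : ℕ) : ℤ × ℕ → ℤ × ℕ → Prop := fun a b =>
  (∃ i j : ℕ, i < l ∧ 1 ≤ j ∧ j ≤ k + i ∧ a = ((i : ℤ) + 1, j) ∧ b = ((i : ℤ), j)) ∨
  (∃ i j : ℕ, i < l ∧ 1 ≤ j ∧ j ≤ k + i ∧ a = ((i : ℤ), j) ∧ b = ((i : ℤ) + 1, j + 1)) ∨
  (∃ i j : ℕ, i < l ∧ 1 ≤ j ∧ j ≤ k ∧ a = (-(i : ℤ) - 1, j) ∧ b = (-(i : ℤ), j)) ∨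
  (∃ i j : ℕ, i < l ∧ 1 ≤ j ∧ j + 1 ≤ k ∧ a = (-(i : ℤ), j) ∧ b = (-(i : ℤ) - 1, j + 1))

/-- `gammaGE k l a b` : `a ≥ b` in the partial order of `Γ(k,ℓ)` generated by the relations. -/
def gammaGE (k l : ℕ) : ℤ × ℕ → ℤ × ℕ → Prop := Relation.ReflTransGen (gammaStep k l)

/-- `tildeGE k l a b` : `a ≥ b` in `Γ̃(k,ℓ)`; each `ε_{s,t}` is comparable only with itself. -/
def tildeGE (k l : ℕ) : GammaAmb → GammaAmb → Prop := fun a b =>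
  (∃ p q, a = Sum.inl p ∧ b = Sum.inl q ∧ gammaGE k l p q) ∨ a = b

/-- `Ω(k,ℓ)`, the additive monoid of order-preserving functions `Γ̃(k,ℓ) → ℤ_{≥0}`,
encoded as functions on the ambient type vanishing outside `Γ̃(k,ℓ)`. -/
def OmegaM (k l : ℕ) : AddSubmonoid (GammaAmb → ℕ) where
  carrier := {f | (∀ a b, tildeGE k l a b → f b ≤ f a) ∧
    ∀ p, p ∉ gammaTildeSet k l → f p = 0}
  add_mem' := by
    rintro f g ⟨hf1, hf2⟩ ⟨hg1, hg2⟩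
    refine ⟨fun a b h => add_le_add (hf1 a b h) (hg1 a b h), fun p hp => ?_⟩
    simp [Pi.add_apply, hf2 p hp, hg2 p hp]
  zero_mem' := ⟨fun _ _ _ => le_rfl, fun _ _ => rfl⟩

def Omega (k l : ℕ) : Set (GammaAmb → ℕ) := OmegaM k l

/-- `f_{i,j}` as an integer. -/
def fval (f : GammaAmb → ℕ) (i : ℤ) (j : ℕ) : ℤ := (f (Sum.inl (i, j)) : ℤ)

/-- `A_j(f)`. -/
def Afun (k : ℕ) (f : GammaAmb → ℕ) (j : ℕ) : ℤ :=
  (∑ a ∈ Finset.Icc 1 (k + j), fval f (j : ℤ) a)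
    - ∑ b ∈ Finset.Icc 1 (k + j - 1), fval f ((j : ℤ) - 1) b

/-- `B_j(f)`. -/
def Bfun (k : ℕ) (f : GammaAmb → ℕ) (j : ℕ) : ℤ :=
  ∑ a ∈ Finset.Icc 1 k, (fval f (-(j : ℤ)) a - fval f (-(j : ℤ) + 1) a)

/-- `P_j(f)`. -/
def Pfun (k l : ℕ) (f : GammaAmb → ℕ) (j : ℕ) : ℤ :=
  Afun k f j + Bfun k f j + (∑ a ∈ Finset.Ico 1 j, (f (Sum.inr (a, j)) : ℤ))
    + ∑ b ∈ Finset.Icc (j + 1) l, (f (Sum.inr (j, b)) : ℤ)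

/-- `Ω_{F,D,P}` : the elements `f ∈ Ω(k,ℓ)` with `f_{-ℓ} = D`, `f_ℓ = F` and `P(f) = P`. -/
def OmegaFDP (k l : ℕ) (D F : ℕ →₀ ℕ) (P : Fin l → ℕ) : Set (GammaAmb → ℕ) :=
  {f ∈ Omega k l |
    (∀ a : ℕ, 1 ≤ a → a ≤ k → f (Sum.inl (-(l : ℤ), a)) = D (a - 1)) ∧
    (∀ a : ℕ, 1 ≤ a → a ≤ k + l → f (Sum.inl ((l : ℤ), a)) = F (a - 1)) ∧
    (∀ j : Fin l, Pfun k l f ((j : ℕ) + 1) = (P j : ℤ))}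

/-- `S(A,B,C)`. -/
def Scomb (l : ℕ) (A B : Fin l → ℕ) (C : ℕ × ℕ → ℕ) : Fin l → ℕ := fun i =>
  A i + B i + (∑ s ∈ Finset.Ico 1 ((i : ℕ) + 1), C (s, (i : ℕ) + 1))
    + ∑ t ∈ Finset.Icc ((i : ℕ) + 2) l, C ((i : ℕ) + 1, t)

/-! ### Increasing subsets -/

/-- The sequence `a_i` attached to `(c, I, J)`. -/
def aSeq (c : ℕ) (I J : Finset ℕ) (i : ℤ) : ℕ :=
  if 0 ≤ i then c + (J ∩ Finset.Icc 1 i.toNat).card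
  else c + (I ∩ Finset.Icc 1 (-i).toNat).card

/-- The increasing subset `A_{(c,I,J)}` of `Γ(k,ℓ)`. -/
def Acij (l c : ℕ) (I J : Finset ℕ) : Set (ℤ × ℕ) :=
  {p | -(l : ℤ) ≤ p.1 ∧ p.1 ≤ (l : ℤ) ∧ 1 ≤ p.2 ∧ p.2 ≤ aSeq c I J p.1}

/-- The increasing subset `A_{(c,I,J)} ∪ Z` of `Γ̃(k,ℓ)`. -/
def AcijT (l c : ℕ) (I J : Finset ℕ) (Z : Finset (ℕ × ℕ)) : Set GammaAmb :=
  Sum.inl '' Acij l c I J ∪ Sum.inr '' (Z : Set (ℕ × ℕ))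

def IsIncreasingG (k l : ℕ) (A : Set (ℤ × ℕ)) : Prop :=
  A ⊆ gammaSet k l ∧ ∀ a ∈ A, ∀ x ∈ gammaSet k l, gammaGE k l x a → x ∈ A

def IsIncreasingT (k l : ℕ) (A : Set GammaAmb) : Prop :=
  A ⊆ gammaTildeSet k l ∧ ∀ a ∈ A, ∀ x ∈ gammaTildeSet k l, tildeGE k l x a → x ∈ A

/-- Characteristic function `χ_A`. -/
def chiInd (A : Set GammaAmb) : GammaAmb → ℕ := A.indicator fun _ => 1

/-! ### The polynomial algebra `P_{n,k,ℓ}` and the action of `U_n × U_k` -/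

/-- Index type for the variables of `P_{n,k,ℓ}` (all indices 0-based):
`inl (i,j) ↦ x_{i+1,j+1}`, `inr (inl (i,j)) ↦ y_{i+1,j+1}`,
`inr (inr (inl (i,j))) ↦ r_{i+1,k+j+1}`, `inr (inr (inr ((s,t),_))) ↦ r_{k+s+1,k+t+1}`. -/
abbrev VarIdx (n k l : ℕ) : Type :=
  (Fin n × Fin k) ⊕ (Fin n × Fin l) ⊕ (Fin k × Fin l) ⊕ {p : Fin l × Fin l // p.1 < p.2}

abbrev PRing (n k l : ℕ) : Type := MvPolynomial (VarIdx n k l) ℂ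

/-- The variable `x_{i,j}` (1-based indices). -/
def xP (n k l : ℕ) (i j : ℕ) : PRing n k l :=
  if h : 1 ≤ i ∧ i ≤ n ∧ 1 ≤ j ∧ j ≤ k then
    X (Sum.inl (⟨i - 1, by omega⟩, ⟨j - 1, by omega⟩)) else 0

/-- The variable `y_{i,j}` (1-based indices). -/
def yP (n k l : ℕ) (i j : ℕ) : PRing n k l :=
  if h : 1 ≤ i ∧ i ≤ n ∧ 1 ≤ j ∧ j ≤ l then
    X (Sum.inr (Sum.inl (⟨i - 1, by omega⟩, ⟨j - 1, by omega⟩))) else 0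

/-- The variable `r_{i,k+j}` (1-based `i ≤ k`, `j ≤ l`). -/
def rP (n k l : ℕ) (i j : ℕ) : PRing n k l :=
  if h : 1 ≤ i ∧ i ≤ k ∧ 1 ≤ j ∧ j ≤ l then
    X (Sum.inr (Sum.inr (Sum.inl (⟨i - 1, by omega⟩, ⟨j - 1, by omega⟩)))) else 0

/-- The variable `r_{k+s,k+t}` (1-based, `1 ≤ s < t ≤ l`). -/
def sP (n k l : ℕ) (s t : ℕ) : PRing n k l :=
  if h : 1 ≤ s ∧ s < t ∧ t ≤ l then
    X (Sum.inr (Sum.inr (Sum.inr ⟨(⟨s - 1, by omega⟩, ⟨t - 1, by omega⟩),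
      by exact Fin.mk_lt_mk.mpr (by omega)⟩))) else 0

/-- Upper triangular unipotent matrices. -/
def IsUU {m : ℕ} (g : Matrix (Fin m) (Fin m) ℂ) : Prop :=
  (∀ i, g i i = 1) ∧ ∀ i j : Fin m, j < i → g i j = 0

/-- The action of a pair of matrices `(g,h)` on `P_{n,k,ℓ}`:
`x_{i,j} ↦ (gᵀXh)_{i,j}`, `y_{i,j} ↦ (gᵀY_j)_i`, `r_{i,k+j} ↦ (hᵀR_j)_i`,
`r_{k+s,k+t} ↦ r_{k+s,k+t}`. -/
def uAct (n k l : ℕ) (g : Matrix (Fin n) (Fin n) ℂ) (h : Matrix (Fin k) (Fin k) ℂ) :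
    PRing n k l →ₐ[ℂ] PRing n k l :=
  aeval fun v => match v with
    | Sum.inl (i, j) => ∑ a : Fin n, ∑ b : Fin k, C (g a i * h b j) * X (Sum.inl (a, b))
    | Sum.inr (Sum.inl (i, j)) => ∑ a : Fin n, C (g a i) * X (Sum.inr (Sum.inl (a, j)))
    | Sum.inr (Sum.inr (Sum.inl (i, j))) =>
        ∑ b : Fin k, C (h b i) * X (Sum.inr (Sum.inr (Sum.inl (b, j))))
    | Sum.inr (Sum.inr (Sum.inr st)) => X (Sum.inr (Sum.inr (Sum.inr st)))

/-- The Pieri algebra `𝔄_{n,k,ℓ} = (P_{n,k,ℓ})^{U_n × U_k}`. -/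
def invariants (n k l : ℕ) : Subalgebra ℂ (PRing n k l) where
  carrier := {f | ∀ g h, IsUU g → IsUU h → uAct n k l g h f = f}
  mul_mem' := by
    intro a b ha hb g h hg hh
    rw [map_mul, ha g h hg hh, hb g h hg hh]
  add_mem' := by
    intro a b ha hb g h hg hh
    rw [map_add, ha g h hg hh, hb g h hg hh]
  one_mem' := fun g h _ _ => map_one _
  zero_mem' := fun g h _ _ => map_zero _
  algebraMap_mem' := fun c g h _ _ => (uAct _ _ _ g h).commutes c

/-! ### The graded lexicographic order -/

/-- Rank of a variable: smaller rank = bigger variable in the order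
`x_{1,1} > x_{2,1} > ⋯ > x_{n,k} > y_{1,1} > ⋯ > y_{n,ℓ} > r_{1,k+1} > ⋯ > r_{k,k+ℓ}
> r_{k+1,k+2} > r_{k+1,k+3} > r_{k+2,k+3} > ⋯ > r_{k+ℓ-1,k+ℓ}`. -/
def vrank (n k l : ℕ) : VarIdx n k l → ℕ
  | Sum.inl (i, j) => j.val * n + i.val
  | Sum.inr (Sum.inl (i, j)) => n * k + j.val * n + i.val
  | Sum.inr (Sum.inr (Sum.inl (i, j))) => n * k + n * l + j.val * k + i.val
  | Sum.inr (Sum.inr (Sum.inr ⟨(s, t), _⟩)) =>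
      n * k + n * l + k * l + t.val * (t.val - 1) / 2 + s.val

/-- Total degree of an exponent vector. -/
def mdeg {n k l : ℕ} (α : VarIdx n k l →₀ ℕ) : ℕ := α.sum fun _ e => e

/-- `grlexLT n k l α β` : the monomial `x^α` is smaller than `x^β` in the graded
lexicographic order. -/
def grlexLT (n k l : ℕ) (α β : VarIdx n k l →₀ ℕ) : Prop :=
  mdeg α < mdeg β ∨ (mdeg α = mdeg β ∧
    ∃ v, α v < β v ∧ ∀ w, vrank n k l w < vrank n k l v → α w = β w)

/-- `IsLeadMon n k l f α` : `x^α` is the leading monomial of `f`. -/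
def IsLeadMon (n k l : ℕ) (f : PRing n k l) (α : VarIdx n k l →₀ ℕ) : Prop :=
  α ∈ f.support ∧ ∀ β ∈ f.support, β ≠ α → grlexLT n k l β α

/-! ### The determinants `η_{(c,I,J)}` -/

/-- The determinant `η_{(c,I,J)}`. -/
def eta (n k l : ℕ) (c : ℕ) (I J : Finset ℕ) : PRing n k l :=
  Matrix.det (Matrix.of fun a b : Fin (c + I.card + J.card) =>
    if a.val < c + J.card then
      if b.val < c + I.card then xP n k l (a.val + 1) (b.val + 1)
      else yP n k l (a.val + 1) ((J.sort (· ≤ ·)).getD (b.val - (c + I.card)) 0)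
    else
      if b.val < c + I.card then
        rP n k l (b.val + 1) ((I.sort (· ≤ ·)).getD (a.val - (c + J.card)) 0)
      else 0)

/-- `η_{χ_B}` for `B = A_{(c,I,J)} ∪ Z`. -/
def etaChi (n k l : ℕ) (c : ℕ) (I J : Finset ℕ) (Z : Finset (ℕ × ℕ)) : PRing n k l :=
  eta n k l c I J * ∏ p ∈ Z, sP n k l p.1 p.2

/-- `IsEtaOf n k l g q` : `q = ∏_j η_{χ_{A_j}}^{c_j}` for some expression
`g = ∑_j c_j χ_{A_j}` with `A_1 ⊆ ⋯ ⊆ A_N` a chain of increasing subsets of `Γ̃(k,ℓ)`. -/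
def IsEtaOf (n k l : ℕ) (g : GammaAmb → ℕ) (q : PRing n k l) : Prop :=
  ∃ (N : ℕ) (co : Fin N → ℕ) (A : Fin N → Set GammaAmb) (fac : Fin N → PRing n k l),
    (∀ j, IsIncreasingT k l (A j)) ∧
    (∀ j j' : Fin N, j ≤ j' → A j ⊆ A j') ∧
    (g = ∑ j : Fin N, co j • chiInd (A j)) ∧
    (∀ j, ∃ (c : ℕ) (I J : Finset ℕ) (Z : Finset (ℕ × ℕ)),
      c ≤ k ∧ I ⊆ Finset.Icc 1 l ∧ J ⊆ Finset.Icc 1 l ∧ I.card ≤ k - c ∧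
      (↑Z : Set (ℕ × ℕ)) ⊆ epsSet l ∧ A j = AcijT l c I J Z ∧
      fac j = etaChi n k l c I J Z) ∧
    q = ∏ j : Fin N, fac j ^ co j

/-- The monomial `m(g)` attached to `g ∈ Ω(k,ℓ)`. -/
def mOf (n k l : ℕ) (g : GammaAmb → ℕ) : PRing n k l :=
  (∏ u ∈ Finset.Icc 1 k, xP n k l u u ^ g (Sum.inl ((0 : ℤ), u)))
  * (∏ b ∈ Finset.Icc 1 l, ∏ a ∈ Finset.Icc 1 (k + b),
      yP n k l a b ^ (g (Sum.inl ((b : ℤ), a)) - g (Sum.inl ((b : ℤ) - 1, a))))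
  * (∏ j ∈ Finset.Icc 1 l, ∏ i ∈ Finset.Icc 1 k,
      rP n k l i j ^ (g (Sum.inl (-(j : ℤ), i)) - g (Sum.inl (-(j : ℤ) + 1, i))))
  * (∏ t ∈ Finset.Icc 1 l, ∏ s ∈ Finset.Ico 1 t, sP n k l s t ^ g (Sum.inr (s, t)))

/-! ### The homogeneous components `E_{F,D,P}` -/

/-- `f` is homogeneous of degree `d` in the set `S` of variables. -/
def HomogOn (n k l : ℕ) (f : PRing n k l) (S : Set (VarIdx n k l)) (d : ℕ) : Prop :=
  ∀ α ∈ f.support, (∑ v ∈ α.support, S.indicator (fun w => α w) v) = d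

/-- The variables `x_{i,1},…,x_{i,k}, y_{i,1},…,y_{i,ℓ}` (1-based `i`). -/
def rowSet (n k l : ℕ) (i : ℕ) : Set (VarIdx n k l) :=
  {v | match v with
    | Sum.inl (a, _) => (a : ℕ) + 1 = i
    | Sum.inr (Sum.inl (a, _)) => (a : ℕ) + 1 = i
    | _ => False}

/-- The variables `x_{1,j},…,x_{n,j}, r_{j,k+1},…,r_{j,k+ℓ}` (1-based `j`). -/
def colSet (n k l : ℕ) (j : ℕ) : Set (VarIdx n k l) :=
  {v | match v with
    | Sum.inl (_, b) => (b : ℕ) + 1 = j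
    | Sum.inr (Sum.inr (Sum.inl (b, _))) => (b : ℕ) + 1 = j
    | _ => False}

/-- The variables `y_{1,t},…,y_{n,t}, r_{1,k+t},…,r_{k,k+t}`, `r_{k+s,k+t} (s<t)`,
`r_{k+t,k+t'} (t<t')` (1-based `t`). -/
def tSet (n k l : ℕ) (t : ℕ) : Set (VarIdx n k l) :=
  {v | match v with
    | Sum.inr (Sum.inl (_, b)) => (b : ℕ) + 1 = t
    | Sum.inr (Sum.inr (Sum.inl (_, b))) => (b : ℕ) + 1 = t
    | Sum.inr (Sum.inr (Sum.inr ⟨(s, u), _⟩)) => (s : ℕ) + 1 = t ∨ (u : ℕ) + 1 = t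
    | _ => False}

theorem homogOn_add {n k l : ℕ} {f g : PRing n k l} {S : Set (VarIdx n k l)} {d : ℕ}
    (hf : HomogOn n k l f S d) (hg : HomogOn n k l g S d) : HomogOn n k l (f + g) S d := by
  intro α hα
  by_cases h : α ∈ f.support
  · exact hf α h
  · refine hg α ?_
    by_contra hg'
    refine MvPolynomial.mem_support_iff.mp hα ?_
    rw [MvPolynomial.coeff_add, MvPolynomial.notMem_support_iff.mp h,
      MvPolynomial.notMem_support_iff.mp hg', add_zero]

/-- The homogeneous component `E_{F,D,P}` of `𝔄_{n,k,ℓ}`. -/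
def Esub (n k l : ℕ) (F D : ℕ →₀ ℕ) (Pv : Fin l → ℕ) : Submodule ℂ (PRing n k l) where
  carrier := {f | f ∈ invariants n k l ∧
    (∀ i : ℕ, 1 ≤ i → i ≤ n → HomogOn n k l f (rowSet n k l i) (F (i - 1))) ∧
    (∀ j : ℕ, 1 ≤ j → j ≤ k → HomogOn n k l f (colSet n k l j) (D (j - 1))) ∧
    (∀ t : Fin l, HomogOn n k l f (tSet n k l ((t : ℕ) + 1)) (Pv t))}
  add_mem' := by
    rintro f g ⟨hf0, hf1, hf2, hf3⟩ ⟨hg0, hg1, hg2, hg3⟩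
    exact ⟨add_mem hf0 hg0,
      fun i h1 h2 => homogOn_add (hf1 i h1 h2) (hg1 i h1 h2),
      fun j h1 h2 => homogOn_add (hf2 j h1 h2) (hg2 j h1 h2),
      fun t => homogOn_add (hf3 t) (hg3 t)⟩
  zero_mem' := by
    refine ⟨zero_mem _, fun i _ _ α hα => ?_, fun j _ _ α hα => ?_, fun t α hα => ?_⟩ <;>
      simp at hα
  smul_mem' := by
    rintro c f ⟨hf0, hf1, hf2, hf3⟩
    refine ⟨(invariants n k l).smul_mem hf0 c,
      fun i h1 h2 α hα => hf1 i h1 h2 α (MvPolynomial.support_smul hα),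
      fun j h1 h2 α hα => hf2 j h1 h2 α (MvPolynomial.support_smul hα),
      fun t α hα => hf3 t α (MvPolynomial.support_smul hα)⟩

/-- The set of leading monomials of nonzero elements of `𝔄_{n,k,ℓ}`
(as monic monomial polynomials). -/
def LMset (n k l : ℕ) : Set (PRing n k l) :=
  {m | ∃ f ∈ invariants n k l, ∃ α, IsLeadMon n k l f α ∧
    m = MvPolynomial.monomial α (1 : ℂ)}


/-! ### Block for Statement 1 : the quotient `𝒫(M_{n,k+ℓ})/J` -/

abbrev QRing (n m : ℕ) : Type := MvPolynomial (Fin n × Fin m) ℂ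

/-- `r_{i,j} = ∑_{a=1}^n x_{a,i} x_{n-a+1,j}`. -/
def rQ (n m : ℕ) (i j : Fin m) : QRing n m := ∑ a : Fin n, X (a, i) * X (a.rev, j)

/-- The ideal `J` generated by `{r_{i,j} : 1 ≤ i,j ≤ k} ∪ {r_{k+j,k+j} : 1 ≤ j ≤ ℓ}`. -/
def JId (n k l : ℕ) : Ideal (QRing n (k + l)) :=
  Ideal.span ({p | ∃ i j : Fin (k + l), (i : ℕ) < k ∧ (j : ℕ) < k ∧ p = rQ n (k + l) i j} ∪
    {p | ∃ j : Fin (k + l), k ≤ (j : ℕ) ∧ p = rQ n (k + l) j j})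

/-- The substitution `x_{i,j} ↦ (g⁻¹ X h)_{i,j}` on `𝒫(M_{n,m})`. -/
def actQ (n m : ℕ) (g : Matrix (Fin n) (Fin n) ℂ) (h : Matrix (Fin m) (Fin m) ℂ) :
    QRing n m →ₐ[ℂ] QRing n m :=
  aeval fun p => ∑ a : Fin n, ∑ b : Fin m, C (g⁻¹ p.1 a * h b p.2) * X (a, b)

/-- The matrix of the symmetric bilinear form `⟨u,v⟩ = ∑ u_a v_{n-a+1}`. -/
def flipMat (n : ℕ) : Matrix (Fin n) (Fin n) ℂ := fun i j => if j = i.rev then 1 else 0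

/-- `g ∈ SO_n` : `g` preserves the form and has determinant 1. -/
def IsSO (n : ℕ) (g : Matrix (Fin n) (Fin n) ℂ) : Prop :=
  g.transpose * flipMat n * g = flipMat n ∧ g.det = 1

/-- `diag(h, 1_ℓ)`, the embedding of `GL_k` into `GL_{k+ℓ}`. -/
def embedU (k l : ℕ) (h : Matrix (Fin k) (Fin k) ℂ) : Matrix (Fin (k + l)) (Fin (k + l)) ℂ :=
  fun i j =>
    if hij : (i : ℕ) < k ∧ (j : ℕ) < k then h ⟨i.val, hij.1⟩ ⟨j.val, hij.2⟩
    else if i = j then 1 else 0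

/-- The invariants `(𝒫(M_{n,k+ℓ})/J)^{U_{SO_n} × U_k}` (invariance tested on every
representative). -/
def SqSet (n k l : ℕ) : Set (QRing n (k + l) ⧸ JId n k l) :=
  {q | ∀ (g : Matrix (Fin n) (Fin n) ℂ) (h : Matrix (Fin k) (Fin k) ℂ),
      IsUU g → IsSO n g → IsUU h →
      ∀ f : QRing n (k + l), Ideal.Quotient.mk (JId n k l) f = q →
        Ideal.Quotient.mk (JId n k l) (actQ n (k + l) g (embedU k l h) f) = q}

/-! ### Block for Statement 16 : the `Sp_{2n}` Pieri algebra -/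

abbrev QSp (n k : ℕ) : Type := MvPolynomial (Fin (2 * n) × Fin k) ℂ
abbrev YRing (n l : ℕ) : Type := MvPolynomial (Fin (2 * n) × Fin l) ℂ

/-- The matrix of the symplectic form `(u,v) = ∑_{a=1}^n (u_a v_{2n+1-a} - u_{2n+1-a} v_a)`. -/
def symplMat (n : ℕ) : Matrix (Fin (2 * n)) (Fin (2 * n)) ℂ :=
  fun i j => if j = i.rev then (if (i : ℕ) < n then 1 else -1) else 0

def IsSp (n : ℕ) (g : Matrix (Fin (2 * n)) (Fin (2 * n)) ℂ) : Prop :=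
  g.transpose * symplMat n * g = symplMat n

/-- The substitution `x_{i,j} ↦ (gᵀ T h)_{i,j}` on `𝒫(M_{2n,k})`. -/
def actSp (n k : ℕ) (g : Matrix (Fin (2 * n)) (Fin (2 * n)) ℂ)
    (h : Matrix (Fin k) (Fin k) ℂ) : QSp n k →ₐ[ℂ] QSp n k :=
  aeval fun p => ∑ a : Fin (2 * n), ∑ b : Fin k, C (g a p.1 * h b p.2) * X (a, b)

/-- The substitution `y_{i,j} ↦ (gᵀ Y_j)_i` on `𝒫(ℂ_1^{2n}) ⊗ ⋯ ⊗ 𝒫(ℂ_ℓ^{2n})`. -/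
def actY (n l : ℕ) (g : Matrix (Fin (2 * n)) (Fin (2 * n)) ℂ) : YRing n l →ₐ[ℂ] YRing n l :=
  aeval fun p => ∑ a : Fin (2 * n), C (g a p.1) * X (a, p.2)

/-- The ideal `I_{2n,k}` generated by all `Sp_{2n}`-invariants with zero constant term. -/
def ISp (n k : ℕ) : Ideal (QSp n k) :=
  Ideal.span {f | (∀ g, IsSp n g → actSp n k g 1 f = f) ∧ MvPolynomial.constantCoeff f = 0}

/-- The canonical surjection `𝒫(M_{2n,k}) ⊗ 𝒫(ℂ^{2n})^{⊗ℓ} → (𝒫(M_{2n,k})/I_{2n,k}) ⊗ ⋯`. -/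
def PsiSp (n k l : ℕ) : (QSp n k ⊗[ℂ] YRing n l) →ₐ[ℂ] ((QSp n k ⧸ ISp n k) ⊗[ℂ] YRing n l) :=
  Algebra.TensorProduct.map (Ideal.Quotient.mkₐ ℂ (ISp n k)) (AlgHom.id ℂ (YRing n l))

/-- The `Sp_{2n}` Pieri algebra `𝒜_{n,k,ℓ}`, as the set of elements of
`(𝒫(M_{2n,k})/I_{2n,k}) ⊗ 𝒫(ℂ_1^{2n}) ⊗ ⋯ ⊗ 𝒫(ℂ_ℓ^{2n})` fixed by `U_{Sp_{2n}} × U_k`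
(invariance tested on every representative). -/
def ASpSet (n k l : ℕ) : Set ((QSp n k ⧸ ISp n k) ⊗[ℂ] YRing n l) :=
  {t | ∀ (g : Matrix (Fin (2 * n)) (Fin (2 * n)) ℂ) (h : Matrix (Fin k) (Fin k) ℂ),
      IsSp n g → IsUU g → IsUU h →
      ∀ w : QSp n k ⊗[ℂ] YRing n l, PsiSp n k l w = t →
        PsiSp n k l (Algebra.TensorProduct.map (actSp n k g h) (actY n l g) w) = t}


/-! ### Block for Statement 15 : flat families -/

/-- A flat `ℂ[t]`-algebra with general fibre `𝔄_{n,k,ℓ}` and special fibre `ℂ[Ω(k,ℓ)]`. -/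
structure FlatFam (n k l : ℕ) : Type 1 where
  R : Type
  [cr : CommRing R]
  [algC : Algebra ℂ R]
  [algP : Algebra (Polynomial ℂ) R]
  [tower : IsScalarTower ℂ (Polynomial ℂ) R]
  flat : Module.Flat (Polynomial ℂ) R
  general : ∀ a : ℂ, a ≠ 0 →
    Nonempty ((R ⧸ Ideal.span {algebraMap (Polynomial ℂ) R (Polynomial.X - Polynomial.C a)})
      ≃ₐ[ℂ] invariants n k l)
  special : Nonempty ((R ⧸ Ideal.span {algebraMap (Polynomial ℂ) R Polynomial.X})
      ≃ₐ[ℂ] AddMonoidAlgebra ℂ (OmegaM k l))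

/-! ### Block for Statement 17 : the real cone -/

/-- The elements of `Γ̃(k,ℓ)` as a subtype. -/
abbrev GTElt (k l : ℕ) : Type := ↥(gammaTildeSet k l)

/-- Extension by zero of a function on `Γ̃(k,ℓ)` to the ambient type. -/
def extZ (k l : ℕ) (f : GTElt k l → ℝ) : GammaAmb → ℝ :=
  fun p => if h : p ∈ gammaTildeSet k l then f ⟨p, h⟩ else 0

/-- `P_j(f)` for a real-valued function `f`. -/
def PfunR (k l : ℕ) (f : GammaAmb → ℝ) (j : ℕ) : ℝ :=
  ((∑ a ∈ Finset.Icc 1 (k + j), f (Sum.inl ((j : ℤ), a)))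
      - ∑ b ∈ Finset.Icc 1 (k + j - 1), f (Sum.inl ((j : ℤ) - 1, b)))
    + (∑ a ∈ Finset.Icc 1 k, (f (Sum.inl (-(j : ℤ), a)) - f (Sum.inl (-(j : ℤ) + 1, a))))
    + (∑ a ∈ Finset.Ico 1 j, f (Sum.inr (a, j)))
    + ∑ b ∈ Finset.Icc (j + 1) l, f (Sum.inr (j, b))

/-- The set `𝒞_{F,D,P}` of nonnegative order-preserving real functions on `Γ̃(k,ℓ)`
with `f_{-ℓ} = D`, `f_ℓ = F` and `P(f) = P`. -/
def CsetFDP (k l : ℕ) (D F : ℕ →₀ ℕ) (P : Fin l → ℕ) : Set (GTElt k l → ℝ) :=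
  {f | (∀ a b : GammaAmb, tildeGE k l a b → extZ k l f b ≤ extZ k l f a) ∧
    (∀ p, 0 ≤ f p) ∧
    (∀ a : ℕ, 1 ≤ a → a ≤ k → extZ k l f (Sum.inl (-(l : ℤ), a)) = (D (a - 1) : ℝ)) ∧
    (∀ a : ℕ, 1 ≤ a → a ≤ k + l → extZ k l f (Sum.inl ((l : ℤ), a)) = (F (a - 1) : ℝ)) ∧
    (∀ j : Fin l, PfunR k l (extZ k l f) ((j : ℕ) + 1) = (P j : ℝ))}

/-! The nonzero entries of the matrix of `η_{(c,I,J)}` are pairwise distinct variables, so its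
determinant is a signed sum of distinct squarefree monomials of the same degree, one for each
permutation avoiding the zero block. The largest of them is found greedily row by row: in every
row, among all admissible permutations that agree with the greedy choice on the earlier rows, the
greedy entry is the largest variable used in the remaining rows. For the rows of `y`'s this needs
a counting argument: once the first `c` columns are taken, the `u` rows of `r`'s must fill the
columns `c+1, …, c+u`, which puts the large `x`-variables of those columns out of reach. -/

end Pieri

namespace Finset

variable {α : Type*} [LinearOrder α] {S : Finset α} {a b : ℕ}

lemma getD_sort_eq_orderEmbOfFin (d : α) (h : a < #S) :
    (S.sort (· ≤ ·)).getD a d = S.orderEmbOfFin rfl ⟨a, h⟩ := by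
  rw [orderEmbOfFin_apply, List.getD_eq_getElem _ _ (by rwa [length_sort])]
  rfl

lemma getD_sort_mem (d : α) (h : a < #S) : (S.sort (· ≤ ·)).getD a d ∈ S := by
  rw [getD_sort_eq_orderEmbOfFin d h]
  exact orderEmbOfFin_mem _ _ _

lemma getD_sort_lt_getD_sort (d : α) (hab : a < b) (hb : b < #S) :
    (S.sort (· ≤ ·)).getD a d < (S.sort (· ≤ ·)).getD b d := by
  rw [getD_sort_eq_orderEmbOfFin d (hab.trans hb), getD_sort_eq_orderEmbOfFin d hb]
  exact (S.orderEmbOfFin rfl).strictMono hab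

end Finset

namespace Pieri

open Finset

section Transversal

variable {V R ι : Type*} [CommRing R] [Fintype ι]

def transversalExp (w : ι → ι → V) (π : Equiv.Perm ι) : V →₀ ℕ :=
  ∑ i, Finsupp.single (w i (π i)) 1

lemma transversalExp_apply (w : ι → ι → V) (π : Equiv.Perm ι) (v : V) :
    transversalExp w π v = #{i | w i (π i) = v} := by
  simp [transversalExp, Finsupp.single_apply, sum_boole]

variable {M : Matrix ι ι (MvPolynomial V R)} {w : ι → ι → V}

lemma prod_entries_eq_monomial (hM : ∀ i j, M i j ≠ 0 → M i j = X (w i j))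
    {π : Equiv.Perm ι} (hπ : ∀ i, M i (π i) ≠ 0) :
    ∏ i, M i (π i) = monomial (transversalExp w π) 1 := by
  rw [transversalExp, monomial_sum_one]
  exact prod_congr rfl fun i _ => hM i (π i) (hπ i)

lemma coeff_prod_entries (hM : ∀ i j, M i j ≠ 0 → M i j = X (w i j))
    (π : Equiv.Perm ι) (β : V →₀ ℕ) :
    coeff β (∏ i, M i (π i)) =
      if (∀ i, M i (π i) ≠ 0) ∧ transversalExp w π = β then 1 else 0 := by
  by_cases hπ : ∀ i, M i (π i) ≠ 0
  · rw [prod_entries_eq_monomial hM hπ, coeff_monomial]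
    exact if_congr (and_iff_right hπ).symm rfl rfl
  · obtain ⟨i, hi⟩ := not_forall_not.mp hπ
    rw [prod_eq_zero (mem_univ i) hi, coeff_zero, if_neg fun h => h.1 i hi]

lemma coeff_det [DecidableEq ι] (hM : ∀ i j, M i j ≠ 0 → M i j = X (w i j)) (β : V →₀ ℕ) :
    coeff β M.det = ∑ π : Equiv.Perm ι,
      if (∀ i, M i (π i) ≠ 0) ∧ transversalExp w π = β then (π.sign : R) else 0 := by
  rw [← Matrix.det_transpose, Matrix.det_apply', coeff_sum]
  refine sum_congr rfl fun π _ => ?_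
  rw [← map_intCast (C : R →+* MvPolynomial V R), coeff_C_mul]
  exact (congrArg _ (coeff_prod_entries hM π β)).trans (by rw [mul_ite, mul_one, mul_zero])

end Transversal

lemma apply_ne_of_eqOn_lt {ι : Type*} [LinearOrder ι] {π π₀ : Equiv.Perm ι} {i₀ i i' : ι}
    (hagree : ∀ i < i₀, π i = π₀ i) (hi : i₀ ≤ i) (hi' : i' < i₀) : π i ≠ π₀ i' :=
  fun h => (hi'.trans_le hi).ne' (π.injective (h.trans (hagree i' hi').symm))

section Greedy

variable {V ι α : Type*} [LinearOrder ι] [Preorder α]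

def IsGreedyTransversal (rank : V → α) (w : ι → ι → V) (P : Equiv.Perm ι → Prop)
    (π₀ : Equiv.Perm ι) : Prop :=
  ∀ π, P π → ∀ i₀, (∀ i < i₀, π i = π₀ i) → ∀ i, i₀ ≤ i →
    (i, π i) = (i₀, π₀ i₀) ∨ rank (w i₀ (π₀ i₀)) < rank (w i (π i))

variable {rank : V → α} {w : ι → ι → V} {P : Equiv.Perm ι → Prop} {π₀ π : Equiv.Perm ι}

lemma IsGreedyTransversal.rank_le (hG : IsGreedyTransversal rank w P π₀) (hπ : P π) {i₀ : ι}
    (hagree : ∀ i < i₀, π i = π₀ i) {i : ι} (hi : i₀ ≤ i) :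
    rank (w i₀ (π₀ i₀)) ≤ rank (w i (π i)) := by
  rcases hG π hπ i₀ hagree i hi with h | h
  · obtain ⟨rfl, h⟩ := Prod.mk.inj h
    rw [h]
  · exact h.le

theorem IsGreedyTransversal.transversalExp_lex [Fintype ι] (hG : IsGreedyTransversal rank w P π₀)
    (hπ₀ : P π₀) (hπ : P π) (hne : π ≠ π₀) :
    ∃ v, transversalExp w π v < transversalExp w π₀ v ∧
      ∀ u, rank u < rank v → transversalExp w π u = transversalExp w π₀ u := by
  obtain ⟨i₀, hi₀, hmin⟩ := wellFounded_lt.has_min {i | π i ≠ π₀ i}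
    (by simpa [Set.Nonempty, Equiv.ext_iff] using hne)
  have hagree : ∀ i < i₀, π i = π₀ i := fun i hi => not_not.1 fun h => hmin i h hi
  refine ⟨w i₀ (π₀ i₀), ?_, fun u hu => ?_⟩
  · have hπv : #{i | w i (π i) = w i₀ (π₀ i₀)} = 0 := by
      refine card_eq_zero.2 (filter_eq_empty_iff.2 fun i _ hi => ?_)
      rcases lt_or_ge i i₀ with h | h
      · rw [hagree i h] at hi
        rcases hG π₀ hπ₀ i (fun _ _ => rfl) i₀ h.le with h' | h'
        · exact h.ne (Prod.mk.inj h').1.symm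
        · exact h'.ne (congrArg rank hi)
      · rcases hG π hπ i₀ hagree i h with h' | h'
        · obtain ⟨rfl, h'⟩ := Prod.mk.inj h'
          exact hi₀ h'
        · exact h'.ne (congrArg rank hi).symm
    rw [transversalExp_apply, transversalExp_apply, hπv]
    exact card_pos.2 ⟨i₀, by simp⟩
  · rw [transversalExp_apply, transversalExp_apply]
    congr 1
    refine filter_congr fun i _ => ?_
    rcases lt_or_ge i i₀ with h | h
    · rw [hagree i h]
    · exact iff_of_false (fun h' => (h' ▸ hG.rank_le hπ hagree h).not_gt hu)
        (fun h' => (h' ▸ hG.rank_le hπ₀ (fun _ _ => rfl) h).not_gt hu)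

end Greedy

lemma grlexLT_irrefl {n k l : ℕ} (α : VarIdx n k l →₀ ℕ) : ¬ grlexLT n k l α α := by
  rintro (h | ⟨-, v, hv, -⟩) <;> exact lt_irrefl _ ‹_›

lemma mdeg_transversalExp {n k l : ℕ} {ι : Type*} [Fintype ι] (w : ι → ι → VarIdx n k l)
    (π : Equiv.Perm ι) : mdeg (transversalExp w π) = Fintype.card ι := by
  rw [mdeg, transversalExp, ← Finsupp.sum_finsetSum_index (fun _ => rfl) (fun _ _ _ => rfl)]
  simp

theorem IsGreedyTransversal.isLeadMon_det {n k l : ℕ} {ι : Type*} [Fintype ι] [LinearOrder ι]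
    {M : Matrix ι ι (PRing n k l)} {w : ι → ι → VarIdx n k l} {π₀ : Equiv.Perm ι}
    (hM : ∀ i j, M i j ≠ 0 → M i j = X (w i j))
    (hG : IsGreedyTransversal (vrank n k l) w (fun π => ∀ i, M i (π i) ≠ 0) π₀)
    (hπ₀ : ∀ i, M i (π₀ i) ≠ 0) :
    M.det ≠ 0 ∧ IsLeadMon n k l M.det (transversalExp w π₀) := by
  have hlt : ∀ π : Equiv.Perm ι, (∀ i, M i (π i) ≠ 0) → π ≠ π₀ →
      grlexLT n k l (transversalExp w π) (transversalExp w π₀) := fun π hπ hne =>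
    Or.inr ⟨by rw [mdeg_transversalExp, mdeg_transversalExp], hG.transversalExp_lex hπ₀ hπ hne⟩
  have hcoeff : coeff (transversalExp w π₀) M.det = (π₀.sign : ℂ) := by
    rw [coeff_det hM]
    refine (sum_eq_single π₀ (fun π _ hne => if_neg fun h => ?_) (by simp)).trans
      (if_pos ⟨hπ₀, rfl⟩)
    exact grlexLT_irrefl _ (h.2 ▸ hlt π h.1 hne)
  have hmem : transversalExp w π₀ ∈ M.det.support := by
    rw [mem_support_iff, hcoeff]
    simp
  refine ⟨fun h => by simp [h] at hmem, hmem, fun β hβ hne => ?_⟩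
  obtain ⟨π, hπ, rfl⟩ : ∃ π : Equiv.Perm ι, (∀ i, M i (π i) ≠ 0) ∧ transversalExp w π = β := by
    by_contra! h
    refine mem_support_iff.1 hβ ?_
    rw [coeff_det hM]
    exact sum_eq_zero fun π _ => if_neg fun hπ => h π hπ.1 hπ.2
  exact hlt π hπ fun h => hne (h ▸ rfl)

/-- The transversal of the claimed leading monomial: `x_{a,a}` in the first `c` rows,
`y_{c+a,j_a}` in the next `v` rows and `r_{c+a,k+i_a}` in the last `u` rows. -/
def etaPerm (c u v : ℕ) : Equiv.Perm (Fin (c + u + v)) where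
  toFun i := ⟨if i < c then i else if i < c + v then i + u else i - v, by
    have := i.isLt; split_ifs <;> omega⟩
  invFun j := ⟨if j < c then j else if j < c + u then j + v else j - u, by
    have := j.isLt; split_ifs <;> omega⟩
  left_inv i := by
    have := i.isLt; ext; dsimp only; split_ifs <;> omega
  right_inv j := by
    have := j.isLt; ext; dsimp only; split_ifs <;> omega

section EtaPerm

variable {c u v : ℕ} {π : Equiv.Perm (Fin (c + u + v))} {a₀ a : Fin (c + u + v)}

lemma etaPerm_val (i : Fin (c + u + v)) :
    (etaPerm c u v i : ℕ) =
      if (i : ℕ) < c then (i : ℕ) else if (i : ℕ) < c + v then (i : ℕ) + u else (i : ℕ) - v :=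
  rfl

lemma val_apply_ne_etaPerm (hagree : ∀ a' < a₀, π a' = etaPerm c u v a') (ha : a₀ ≤ a)
    {x : ℕ} (hx : x < a₀) : (π a : ℕ) ≠ etaPerm c u v ⟨x, hx.trans a₀.isLt⟩ :=
  fun h => apply_ne_of_eqOn_lt hagree ha (Fin.lt_def.2 hx) (Fin.ext h)

/-- Counting: the `u` rows from `c + v` on fill the columns `c, …, c + u - 1`. -/
lemma add_le_apply_of_fixes (hπ : ∀ a : Fin (c + u + v), c + v ≤ a → (π a : ℕ) < c + u)
    (hfix : ∀ a : Fin (c + u + v), (a : ℕ) < c → π a = a) (hca : c ≤ (a : ℕ))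
    (hav : (a : ℕ) < c + v) : c + u ≤ π a := by
  have hc : ∀ a : Fin (c + u + v), c ≤ a → c ≤ π a := fun a ha => by
    by_contra! h
    have := congrArg Fin.val (π.injective (hfix (π a) h))
    omega
  by_contra! h
  obtain ⟨x, hx, hax⟩ := surj_on_of_inj_on_of_card_le (s := Ico (c + v) (c + u + v))
    (t := Ico c (c + u)) (fun x hx => (π ⟨x, (mem_Ico.1 hx).2⟩ : ℕ))
    (fun x hx => mem_Ico.2 ⟨hc _ (show c ≤ x by have := (mem_Ico.1 hx).1; omega), hπ _ (mem_Ico.1 hx).1⟩)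
    (fun x y hx hy hxy => by simpa using π.injective (Fin.ext hxy))
    (by simp only [Nat.card_Ico]; omega) (π a) (mem_Ico.2 ⟨hc a hca, h⟩)
  have : (a : ℕ) = x := congrArg Fin.val (π.injective (Fin.ext hax))
  rw [mem_Ico] at hx
  omega

end EtaPerm

lemma mul_add_lt_mul_add {m p₀ p q₀ q : ℕ} (h : q₀ < q ∨ q₀ = q ∧ p₀ < p) (hp₀ : p₀ < m) :
    q₀ * m + p₀ < q * m + p := by
  rcases h with h | ⟨rfl, h⟩
  · nlinarith
  · omega

section Eta

def etaEntry (n k l c : ℕ) (I J : Finset ℕ) (a b : ℕ) : PRing n k l :=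
  if a < c + #J then
    if b < c + #I then xP n k l (a + 1) (b + 1)
    else yP n k l (a + 1) ((J.sort (· ≤ ·)).getD (b - (c + #I)) 0)
  else
    if b < c + #I then rP n k l (b + 1) ((I.sort (· ≤ ·)).getD (a - (c + #J)) 0)
    else 0

lemma eta_eq_det (n k l c : ℕ) (I J : Finset ℕ) :
    eta n k l c I J =
      (Matrix.of fun a b : Fin (c + #I + #J) => etaEntry n k l c I J a b).det := rfl

/-- `Fin.ofNat` only makes this total: at the nonzero entries nothing is reduced
(`etaEntry_eq_X`). -/
def etaVar (n k l c : ℕ) [NeZero n] [NeZero k] [NeZero l] (I J : Finset ℕ) (a b : ℕ) :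
    VarIdx n k l :=
  if a < c + #J then
    if b < c + #I then Sum.inl (Fin.ofNat n a, Fin.ofNat k b)
    else Sum.inr (Sum.inl (Fin.ofNat n a, Fin.ofNat l ((J.sort (· ≤ ·)).getD (b - (c + #I)) 0 - 1)))
  else
    Sum.inr (Sum.inr (Sum.inl
      (Fin.ofNat k b, Fin.ofNat l ((I.sort (· ≤ ·)).getD (a - (c + #J)) 0 - 1))))

structure EtaShape (n k l c : ℕ) (I J : Finset ℕ) : Prop where
  subset_I : I ⊆ Icc 1 l
  subset_J : J ⊆ Icc 1 l
  card_I : c + #I ≤ k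
  card_J : c + #J ≤ n

variable {n k l c : ℕ} {I J : Finset ℕ}

lemma EtaShape.getD_I (h : EtaShape n k l c I J) {x : ℕ} (hx : x < #I) :
    1 ≤ (I.sort (· ≤ ·)).getD x 0 ∧ (I.sort (· ≤ ·)).getD x 0 ≤ l :=
  mem_Icc.1 (h.subset_I (getD_sort_mem 0 hx))

lemma EtaShape.getD_J (h : EtaShape n k l c I J) {x : ℕ} (hx : x < #J) :
    1 ≤ (J.sort (· ≤ ·)).getD x 0 ∧ (J.sort (· ≤ ·)).getD x 0 ≤ l :=
  mem_Icc.1 (h.subset_J (getD_sort_mem 0 hx))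

lemma etaEntry_eq_zero {a b : ℕ} (ha : c + #J ≤ a) (hb : c + #I ≤ b) :
    etaEntry n k l c I J a b = 0 := by
  simp [etaEntry, not_lt.2 ha, not_lt.2 hb]

variable [NeZero n] [NeZero k] [NeZero l]

lemma etaEntry_eq_X (h : EtaShape n k l c I J) {a b : ℕ} (ha : a < c + #I + #J)
    (hb : b < c + #I + #J) (hab : a < c + #J ∨ b < c + #I) :
    etaEntry n k l c I J a b = X (etaVar n k l c I J a b) := by
  have := h.card_I; have := h.card_J
  unfold etaEntry etaVar
  split_ifs with h1 h2 h2
  · rw [xP, dif_pos (by omega)]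
    congr <;> exact ((Nat.mod_eq_of_lt (by omega)).trans (by omega)).symm
  · have := h.getD_J (x := b - (c + #I)) (by omega)
    rw [yP, dif_pos (by omega)]
    congr <;> exact ((Nat.mod_eq_of_lt (by omega)).trans (by omega)).symm
  · have := h.getD_I (x := a - (c + #J)) (by omega)
    rw [rP, dif_pos (by omega)]
    congr <;> exact ((Nat.mod_eq_of_lt (by omega)).trans (by omega)).symm
  · omega

lemma etaEntry_eq_X_of_ne_zero (h : EtaShape n k l c I J) (a b : Fin (c + #I + #J))
    (hab : etaEntry n k l c I J a b ≠ 0) :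
    etaEntry n k l c I J a b = X (etaVar n k l c I J a b) :=
  etaEntry_eq_X h a.isLt b.isLt (by by_contra! h'; exact hab (etaEntry_eq_zero h'.1 h'.2))

lemma etaEntry_etaPerm_ne_zero (h : EtaShape n k l c I J) (a : Fin (c + #I + #J)) :
    etaEntry n k l c I J a (etaPerm c #I #J a) ≠ 0 := by
  rw [etaEntry_eq_X h a.isLt (etaPerm c #I #J a).isLt (by rw [etaPerm_val]; split_ifs <;> omega)]
  exact X_ne_zero _

lemma vrank_etaVar_x (h : EtaShape n k l c I J) {a b : ℕ} (ha : a < c + #J) (hb : b < c + #I) :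
    vrank n k l (etaVar n k l c I J a b) = b * n + a := by
  have := h.card_I; have := h.card_J
  simp only [etaVar, if_pos ha, if_pos hb, vrank, Fin.val_ofNat]
  rw [Nat.mod_eq_of_lt (by omega), Nat.mod_eq_of_lt (by omega)]

lemma vrank_etaVar_y (h : EtaShape n k l c I J) {a b : ℕ} (ha : a < c + #J) (hb : c + #I ≤ b)
    (hb' : b < c + #I + #J) :
    vrank n k l (etaVar n k l c I J a b) =
      n * k + ((J.sort (· ≤ ·)).getD (b - (c + #I)) 0 - 1) * n + a := by
  have := h.card_J; have := h.getD_J (x := b - (c + #I)) (by omega)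
  simp only [etaVar, if_pos ha, if_neg (not_lt.2 hb), vrank, Fin.val_ofNat]
  rw [Nat.mod_eq_of_lt (by omega), Nat.mod_eq_of_lt (by omega)]

lemma vrank_etaVar_r (h : EtaShape n k l c I J) {a b : ℕ} (ha : c + #J ≤ a)
    (ha' : a < c + #I + #J) (hb : b < c + #I) :
    vrank n k l (etaVar n k l c I J a b) =
      n * k + n * l + ((I.sort (· ≤ ·)).getD (a - (c + #J)) 0 - 1) * k + b := by
  have := h.card_I; have := h.getD_I (x := a - (c + #J)) (by omega)
  simp only [etaVar, if_neg (not_lt.2 ha), vrank, Fin.val_ofNat]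
  rw [Nat.mod_eq_of_lt (by omega), Nat.mod_eq_of_lt (by omega)]

lemma mul_le_vrank_etaVar {a b : ℕ} (hab : ¬(a < c + #J ∧ b < c + #I)) :
    n * k ≤ vrank n k l (etaVar n k l c I J a b) := by
  unfold etaVar
  split_ifs <;> simp only [vrank] <;> omega

lemma mul_add_mul_le_vrank_etaVar {a b : ℕ} (ha : c + #J ≤ a) :
    n * k + n * l ≤ vrank n k l (etaVar n k l c I J a b) := by
  simp only [etaVar, if_neg (not_lt.2 ha), vrank]
  omega

variable {π : Equiv.Perm (Fin (c + #I + #J))} {a₀ a : Fin (c + #I + #J)}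

lemma etaPerm_greedy_xRow (h : EtaShape n k l c I J)
    (hagree : ∀ a' < a₀, π a' = etaPerm c #I #J a') (ha : a₀ ≤ a) (h₀ : (a₀ : ℕ) < c) :
    (a, π a) = (a₀, etaPerm c #I #J a₀) ∨
      vrank n k l (etaVar n k l c I J a₀ (etaPerm c #I #J a₀)) <
        vrank n k l (etaVar n k l c I J a (π a)) := by
  have := h.card_I; have := h.card_J; have := Fin.le_def.1 ha
  have hpiv : (etaPerm c #I #J a₀ : ℕ) = a₀ := by rw [etaPerm_val, if_pos h₀]
  have hb : (a₀ : ℕ) ≤ π a := by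
    by_contra! hb
    exact val_apply_ne_etaPerm hagree ha hb (by simp only [etaPerm_val]; split_ifs <;> omega)
  rw [vrank_etaVar_x h (by omega) (by omega), hpiv]
  by_cases hx : (a : ℕ) < c + #J ∧ (π a : ℕ) < c + #I
  · rw [vrank_etaVar_x h hx.1 hx.2]
    by_cases heq : (a : ℕ) = a₀ ∧ (π a : ℕ) = a₀
    · exact Or.inl (Prod.ext (Fin.ext heq.1) (Fin.ext (heq.2.trans hpiv.symm)))
    · exact Or.inr (mul_add_lt_mul_add (by omega) (by omega))
  · refine Or.inr (lt_of_lt_of_le ?_ (mul_le_vrank_etaVar hx))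
    calc (a₀ : ℕ) * n + a₀ < k * n + 0 := mul_add_lt_mul_add (by omega) (by omega)
      _ = n * k := by ring

lemma etaPerm_greedy_yRow (h : EtaShape n k l c I J)
    (hπ : ∀ a : Fin (c + #I + #J), c + #J ≤ a → (π a : ℕ) < c + #I)
    (hagree : ∀ a' < a₀, π a' = etaPerm c #I #J a') (ha : a₀ ≤ a) (h₀ : c ≤ (a₀ : ℕ))
    (h₀' : (a₀ : ℕ) < c + #J) :
    (a, π a) = (a₀, etaPerm c #I #J a₀) ∨
      vrank n k l (etaVar n k l c I J a₀ (etaPerm c #I #J a₀)) <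
        vrank n k l (etaVar n k l c I J a (π a)) := by
  have := h.card_I; have := h.card_J; have := Fin.le_def.1 ha
  have hpiv : (etaPerm c #I #J a₀ : ℕ) = a₀ + #I := by
    rw [etaPerm_val, if_neg (by omega), if_pos h₀']
  have := h.getD_J (x := a₀ - c) (by omega)
  rw [vrank_etaVar_y h h₀' (by omega) (by omega), hpiv,
    show (a₀ : ℕ) + #I - (c + #I) = a₀ - c by omega]
  by_cases hr : c + #J ≤ (a : ℕ)
  · refine Or.inr (lt_of_lt_of_le ?_ (mul_add_mul_le_vrank_etaVar hr))
    have := mul_add_lt_mul_add (p := 0)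
      (Or.inl (by omega : (J.sort (· ≤ ·)).getD (a₀ - c) 0 - 1 < l)) (show (a₀ : ℕ) < n by omega)
    linarith [mul_comm l n]
  have hfix : ∀ a' : Fin (c + #I + #J), (a' : ℕ) < c → π a' = a' := fun a' h' =>
    (hagree a' (Fin.lt_def.2 (by omega))).trans (Fin.ext (by rw [etaPerm_val, if_pos h']))
  have hb := add_le_apply_of_fixes hπ hfix (a := a) (by omega) (by omega)
  have hb' : (a₀ : ℕ) + #I ≤ π a := by
    by_contra! hb'
    exact val_apply_ne_etaPerm hagree ha (x := π a - #I) (by omega)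
      (by simp only [etaPerm_val]; split_ifs <;> omega)
  rw [vrank_etaVar_y h (by omega) hb (π a).isLt]
  rcases (show (a₀ : ℕ) - c ≤ π a - (c + #I) by omega).eq_or_lt with hx | hx
  · by_cases heq : (a : ℕ) = a₀
    · exact Or.inl (Prod.ext (Fin.ext heq) (Fin.ext (show (π a : ℕ) = etaPerm c #I #J a₀ by omega)))
    · rw [← hx]
      exact Or.inr (by omega)
  · have := getD_sort_lt_getD_sort 0 hx (by omega : (π a : ℕ) - (c + #I) < #J)
    have := mul_add_lt_mul_add (p := a) (Or.inl (by omega : (J.sort (· ≤ ·)).getD (a₀ - c) 0 - 1 <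
      (J.sort (· ≤ ·)).getD (π a - (c + #I)) 0 - 1)) (show (a₀ : ℕ) < n by omega)
    exact Or.inr (by omega)

lemma etaPerm_greedy_rRow (h : EtaShape n k l c I J)
    (hπ : ∀ a : Fin (c + #I + #J), c + #J ≤ a → (π a : ℕ) < c + #I)
    (hagree : ∀ a' < a₀, π a' = etaPerm c #I #J a') (ha : a₀ ≤ a) (h₀ : c + #J ≤ (a₀ : ℕ)) :
    (a, π a) = (a₀, etaPerm c #I #J a₀) ∨
      vrank n k l (etaVar n k l c I J a₀ (etaPerm c #I #J a₀)) <
        vrank n k l (etaVar n k l c I J a (π a)) := by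
  have := h.card_I; have := h.card_J; have := Fin.le_def.1 ha; have := a₀.isLt
  have hpiv : (etaPerm c #I #J a₀ : ℕ) = a₀ - #J := by
    rw [etaPerm_val, if_neg (by omega), if_neg (by omega)]
  have hb := hπ a (by omega)
  have hb' : (a₀ : ℕ) - #J ≤ π a := by
    by_contra! hb'
    by_cases hbc : (π a : ℕ) < c
    · exact val_apply_ne_etaPerm hagree ha (x := π a) (by omega) (by rw [etaPerm_val, if_pos hbc])
    · exact val_apply_ne_etaPerm hagree ha (x := π a + #J) (by omega)
        (by simp only [etaPerm_val]; split_ifs <;> omega)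
  have := h.getD_I (x := a₀ - (c + #J)) (by omega)
  rw [vrank_etaVar_r h h₀ a₀.isLt (by omega), hpiv, vrank_etaVar_r h (by omega) a.isLt hb]
  rcases (Fin.le_def.1 ha).eq_or_lt with hx | hx
  · by_cases heq : (π a : ℕ) = a₀ - #J
    · exact Or.inl (Prod.ext (Fin.ext hx.symm) (Fin.ext (heq.trans hpiv.symm)))
    · rw [← hx]
      exact Or.inr (by omega)
  · have := getD_sort_lt_getD_sort 0 (show (a₀ : ℕ) - (c + #J) < a - (c + #J) by omega)
      (by omega : (a : ℕ) - (c + #J) < #I)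
    have := mul_add_lt_mul_add (p := π a) (Or.inl (by omega :
      (I.sort (· ≤ ·)).getD (a₀ - (c + #J)) 0 - 1 < (I.sort (· ≤ ·)).getD (a - (c + #J)) 0 - 1))
      (show (a₀ : ℕ) - #J < k by omega)
    exact Or.inr (by omega)

lemma isGreedyTransversal_etaPerm (h : EtaShape n k l c I J) :
    IsGreedyTransversal (vrank n k l) (fun a b : Fin (c + #I + #J) => etaVar n k l c I J a b)
      (fun π => ∀ a : Fin (c + #I + #J), etaEntry n k l c I J a (π a) ≠ 0) (etaPerm c #I #J) := by
  intro π hπ a₀ hagree a ha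
  have hπ' : ∀ a : Fin (c + #I + #J), c + #J ≤ a → (π a : ℕ) < c + #I := fun a ha' => by
    by_contra! hb
    exact hπ a (etaEntry_eq_zero ha' hb)
  rcases lt_or_ge (a₀ : ℕ) c with h₀ | h₀
  · exact etaPerm_greedy_xRow h hagree ha h₀
  rcases lt_or_ge (a₀ : ℕ) (c + #J) with h₀' | h₀'
  · exact etaPerm_greedy_yRow h hπ' hagree ha h₀ h₀'
  · exact etaPerm_greedy_rRow h hπ' hagree ha h₀'

end Eta

lemma prod_etaEntry_etaPerm (n k l c : ℕ) (I J : Finset ℕ) :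
    ∏ a : Fin (c + #I + #J), etaEntry n k l c I J a (etaPerm c #I #J a) =
      (∏ a ∈ range c, xP n k l (a + 1) (a + 1))
        * (∏ a ∈ range #J, yP n k l (c + a + 1) ((J.sort (· ≤ ·)).getD a 0))
        * (∏ a ∈ range #I, rP n k l (c + a + 1) ((I.sort (· ≤ ·)).getD a 0)) := by
  refine (Fin.prod_univ_eq_prod_range (fun a => etaEntry n k l c I J a
      (if a < c then a else if a < c + #J then a + #I else a - #J)) (c + #I + #J)).trans ?_
  rw [show c + #I + #J = c + #J + #I by omega, prod_range_add, prod_range_add]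
  refine congr_arg₂ _ (congr_arg₂ _ (prod_congr rfl fun x hx => ?_) (prod_congr rfl fun x hx => ?_))
    (prod_congr rfl fun x hx => ?_) <;> rw [mem_range] at hx
  · rw [if_pos hx, etaEntry, if_pos (by omega), if_pos (by omega)]
  · rw [if_neg (by omega), if_pos (by omega), etaEntry, if_pos (by omega), if_neg (by omega),
      show c + x + #I - (c + #I) = x by omega]
  · rw [if_neg (by omega), if_neg (by omega), etaEntry, if_neg (by omega), if_pos (by omega),
      show c + #J + x - #J = c + x by omega, show c + #J + x - (c + #J) = x by omega]

theorem statement_6_general (n k l : ℕ) (hk : 0 < k) (hl : 0 < l)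
    (hst : 2 * (k + l) < n) (c : ℕ) (hc : c ≤ k) (I J : Finset ℕ)
    (hI : I ⊆ Finset.Icc 1 l) (hJ : J ⊆ Finset.Icc 1 l) (hu : I.card ≤ k - c) :
    eta n k l c I J ≠ 0 ∧
    ∃ α, IsLeadMon n k l (eta n k l c I J) α ∧
      MvPolynomial.monomial α (1 : ℂ) =
        (∏ a ∈ Finset.range c, xP n k l (a + 1) (a + 1))
        * (∏ a ∈ Finset.range J.card, yP n k l (c + a + 1) ((J.sort (· ≤ ·)).getD a 0))
        * (∏ a ∈ Finset.range I.card, rP n k l (c + a + 1) ((I.sort (· ≤ ·)).getD a 0)) := by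
  have : NeZero n := ⟨by omega⟩
  have : NeZero k := ⟨hk.ne'⟩
  have : NeZero l := ⟨hl.ne'⟩
  have hJl : #J ≤ l := by simpa using card_le_card hJ
  have h : EtaShape n k l c I J := ⟨hI, hJ, by omega, by omega⟩
  rw [eta_eq_det]
  obtain ⟨hne, hlead⟩ := (isGreedyTransversal_etaPerm h).isLeadMon_det
    (etaEntry_eq_X_of_ne_zero h) (etaEntry_etaPerm_ne_zero h)
  refine ⟨hne, _, hlead, ?_⟩
  rw [← prod_entries_eq_monomial (etaEntry_eq_X_of_ne_zero h) (etaEntry_etaPerm_ne_zero h)]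
  exact prod_etaEntry_etaPerm n k l c I J

theorem statement_6 (n k l : ℕ) (hn : 0 < n) (hk : 0 < k) (hl : 0 < l)
    (hst : 2 * (k + l) < n) (c : ℕ) (hc : c ≤ k) (I J : Finset ℕ)
    (hI : I ⊆ Finset.Icc 1 l) (hJ : J ⊆ Finset.Icc 1 l) (hu : I.card ≤ k - c) :
    eta n k l c I J ≠ 0 ∧
    ∃ α, IsLeadMon n k l (eta n k l c I J) α ∧
      MvPolynomial.monomial α (1 : ℂ) =
        (∏ a ∈ Finset.range c, xP n k l (a + 1) (a + 1))
        * (∏ a ∈ Finset.range J.card, yP n k l (c + a + 1) ((J.sort (· ≤ ·)).getD a 0))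
        * (∏ a ∈ Finset.range I.card, rP n k l (c + a + 1) ((I.sort (· ≤ ·)).getD a 0)) :=
  statement_6_general n k l hk hl hst c hc I J hI hJ hu

end Pieri
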